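/- arXiv:2301.06569 — 2 statements merged into one kernel-verified Lean document; each statement's English description precedes it below -/
import Mathlib

section
/- Every self-complementary regular graph on at least 2 vertices has diameter exactly two. -/
theorem stmt_5 {V : Type*} [Fintype V] (Γ : SimpleGraph V) [DecidableRel Γ.Adj]
    (hcard : 2 ≤ Fintype.card V) (k : ℕ) (hreg : Γ.IsRegularOfDegree k)
    (hsc : Nonempty (Γ ≃g Γᶜ)) : Γ.ediam = 2 := by
  classical
  obtain ⟨e⟩ := hsc
  have : Nonempty V := Fintype.card_pos_iff.mp (by omega)
  -- complement is also k-regular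
  have hregc : Γᶜ.IsRegularOfDegree k := by
    intro w
    have := Fintype.card_congr (e.mapNeighborSet (e.symm w))
    rw [SimpleGraph.card_neighborSet_eq_degree, SimpleGraph.card_neighborSet_eq_degree,
      e.apply_symm_apply] at this
    rw [← this, hreg (e.symm w)]
  have hk : Fintype.card V - 1 - k = k := by
    obtain ⟨v⟩ := ‹Nonempty V›
    have h1 := hreg.compl v
    have h2 := hregc v
    omega
  have hkle : k ≤ Fintype.card V - 1 := by
    obtain ⟨v⟩ := ‹Nonempty V›
    have := Γ.degree_lt_card_verts v
    rw [hreg v] at this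
    omega
  have hn : Fintype.card V = 2 * k + 1 := by omega
  have hk1 : 1 ≤ k := by omega
  -- upper bound
  have hub : Γ.ediam ≤ 2 := by
    apply SimpleGraph.ediam_le_of_edist_le
    intro u v
    rcases eq_or_ne u v with rfl | huv
    · simp [SimpleGraph.edist_self]
    by_cases hadj : Γ.Adj u v
    · rw [SimpleGraph.edist_eq_one_iff_adj.mpr hadj]
      exact one_le_two
    · -- common neighbor
      set A := Γ.neighborFinset u with hA
      set B := Γ.neighborFinset v with hB
      have hsub : A ∪ B ⊆ (Finset.univ : Finset V) \ {u, v} := by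
        intro w hw
        simp only [Finset.mem_sdiff, Finset.mem_univ, true_and, Finset.mem_insert,
          Finset.mem_singleton]
        rcases Finset.mem_union.mp hw with h | h
        · rw [hA, SimpleGraph.mem_neighborFinset] at h
          push_neg
          exact ⟨fun hq => Γ.irrefl (hq ▸ h), fun hq => hadj (hq ▸ h)⟩
        · rw [hB, SimpleGraph.mem_neighborFinset] at h
          push_neg
          exact ⟨fun hq => hadj (hq ▸ h.symm), fun hq => Γ.irrefl (hq ▸ h)⟩
      have hcardsd : ((Finset.univ : Finset V) \ {u, v}).card = Fintype.card V - 2 := by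
        rw [Finset.card_sdiff_of_subset (by simp)]
        rw [Finset.card_insert_of_notMem (by simpa using huv), Finset.card_singleton,
          Finset.card_univ]
      have hU : (A ∪ B).card ≤ Fintype.card V - 2 :=
        hcardsd ▸ Finset.card_le_card hsub
      have hAB : A.card + B.card = 2 * k := by
        simp only [hA, hB, SimpleGraph.card_neighborFinset_eq_degree, hreg u, hreg v]
        ring
      have hinter : (A ∩ B).Nonempty := by
        rw [← Finset.card_pos]
        have := Finset.card_inter_add_card_union A B
        omega
      obtain ⟨w, hw⟩ := hinter
      rw [Finset.mem_inter, hA, hB, SimpleGraph.mem_neighborFinset,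
        SimpleGraph.mem_neighborFinset] at hw
      calc Γ.edist u v ≤ Γ.edist u w + Γ.edist w v := Γ.edist_triangle
        _ ≤ 1 + 1 := add_le_add
            (le_of_eq (SimpleGraph.edist_eq_one_iff_adj.mpr hw.1))
            (le_of_eq (SimpleGraph.edist_eq_one_iff_adj.mpr hw.2.symm))
        _ = 2 := by norm_num
  -- lower bound: exists non-adjacent distinct pair
  have hlb : (2 : ℕ∞) ≤ Γ.ediam := by
    obtain ⟨v⟩ := ‹Nonempty V›
    have : (Γᶜ.neighborFinset v).Nonempty := by
      rw [← Finset.card_pos, SimpleGraph.card_neighborFinset_eq_degree, hregc v]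
      omega
    obtain ⟨w, hw⟩ := this
    rw [SimpleGraph.mem_neighborFinset, SimpleGraph.compl_adj] at hw
    have h0 : Γ.edist v w ≠ 0 := fun h =>
      hw.1 (SimpleGraph.edist_eq_zero_iff.mp h)
    have h1 : Γ.edist v w ≠ 1 := fun h =>
      hw.2 (SimpleGraph.edist_eq_one_iff_adj.mp h)
    have h2 : (2 : ℕ∞) ≤ Γ.edist v w := by
      cases hx : Γ.edist v w with
      | top => exact le_top
      | coe n =>
        rw [hx] at h0 h1
        have hn0 : n ≠ 0 := fun h => h0 (by simp [h])
        have hn1 : n ≠ 1 := fun h => h1 (by simp [h])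
        exact_mod_cast (by omega : 2 ≤ n)
    exact h2.trans Γ.edist_le_ediam
  exact le_antisymm hub hlb
end

section
/- The lexicographic product of two self-complementary graphs is self-complementary. -/
/-- The lexicographic product of two graphs: `(a, b)` is adjacent to `(c, d)` iff
`a` is adjacent to `c` in `Γ₁`, or `a = c` and `b` is adjacent to `d` in `Γ₂`. -/
def SimpleGraph.lexProd {V₁ V₂ : Type*} (Γ₁ : SimpleGraph V₁) (Γ₂ : SimpleGraph V₂) :
    SimpleGraph (V₁ × V₂) where
  Adj x y := Γ₁.Adj x.1 y.1 ∨ (x.1 = y.1 ∧ Γ₂.Adj x.2 y.2)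
  symm := by
    constructor
    rintro x y (h | ⟨h, h'⟩)
    · exact Or.inl h.symm
    · exact Or.inr ⟨h.symm, h'.symm⟩
  loopless := by
    constructor
    rintro x (h | ⟨-, h⟩)
    · exact Γ₁.irrefl h
    · exact Γ₂.irrefl h

/-!
The complement of `Γ₁[Γ₂]` is `Γ₁ᶜ[Γ₂ᶜ]`: across different fibres adjacency is decided by `Γ₁`
alone, and inside a fibre by `Γ₂` alone. Hence isomorphisms `Γ₁ ≃ Γ₁ᶜ` and `Γ₂ ≃ Γ₂ᶜ`, applied
coordinatewise, give `Γ₁[Γ₂] ≃ Γ₁ᶜ[Γ₂ᶜ] = (Γ₁[Γ₂])ᶜ`.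
-/

namespace SimpleGraph

variable {V₁ V₂ W₁ W₂ : Type*}

theorem compl_lexProd (Γ₁ : SimpleGraph V₁) (Γ₂ : SimpleGraph V₂) :
    (Γ₁.lexProd Γ₂)ᶜ = Γ₁ᶜ.lexProd Γ₂ᶜ := by
  ext ⟨a, b⟩ ⟨c, d⟩
  simp only [compl_adj, lexProd, ne_eq, Prod.mk.injEq]
  by_cases hac : a = c
  · subst hac
    simp
  · simp [hac]

def Iso.lexProd {Γ₁ : SimpleGraph V₁} {Γ₂ : SimpleGraph V₂} {Δ₁ : SimpleGraph W₁}
    {Δ₂ : SimpleGraph W₂} (f : Γ₁ ≃g Δ₁) (g : Γ₂ ≃g Δ₂) :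
    Γ₁.lexProd Γ₂ ≃g Δ₁.lexProd Δ₂ where
  toEquiv := f.toEquiv.prodCongr g.toEquiv
  map_rel_iff' := or_congr f.map_adj_iff (and_congr f.apply_eq_iff_eq g.map_adj_iff)

end SimpleGraph

open SimpleGraph

theorem stmt_15 {V₁ V₂ : Type*} (Γ₁ : SimpleGraph V₁) (Γ₂ : SimpleGraph V₂)
    (h₁ : Nonempty (Γ₁ ≃g Γ₁ᶜ)) (h₂ : Nonempty (Γ₂ ≃g Γ₂ᶜ)) :
    Nonempty (Γ₁.lexProd Γ₂ ≃g (Γ₁.lexProd Γ₂)ᶜ) := by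
  obtain ⟨f⟩ := h₁
  obtain ⟨g⟩ := h₂
  rw [compl_lexProd]
  exact ⟨f.lexProd g⟩
end
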